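/- arXiv:1605.03733 — 3 statements merged into one kernel-verified Lean document; each statement's English description precedes it below -/
import Mathlib

section
/- The stable spline kernel matrix K_β with entries [K_β]_{i,j} = β^{max(i,j)}, for β ∈ (0,1), is positive definite for every n ≥ 1. -/
/-!
With `L` the lower-triangular all-ones matrix and `aₖ = β^(k+1)`, telescoping
`a_m = ∑_{m ≤ k < n} (a_k - a_{k+1}) + a_n` gives
`K = Lᵀ · diag(a_k - a_{k+1}) · L + a_n · 𝟙𝟙ᵀ`.
The differences are positive since `a` is strictly decreasing and `L` is unitriangular,
so the first summand is positive definite and the second positive semidefinite.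
-/

open Matrix Finset

theorem Fin.sum_ite_le_sub_succ (a : ℕ → ℝ) {m n : ℕ} (hm : m ≤ n) :
    ∑ k : Fin n, (if m ≤ (k : ℕ) then a k - a (k + 1) else 0) = a m - a n := by
  rw [Fin.sum_univ_eq_sum_range (fun k => if m ≤ k then a k - a (k + 1) else 0), ← sum_filter,
    range_eq_Ico, Ico_filter_le, max_eq_right (Nat.zero_le m), ← neg_sub, ← sum_Ico_sub a hm,
    ← sum_neg_distrib]
  simp only [neg_sub]

namespace Matrix

def lowerOnes (n : ℕ) : Matrix (Fin n) (Fin n) ℝ :=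
  of fun k i => if i ≤ k then 1 else 0

theorem isUnit_lowerOnes (n : ℕ) : IsUnit (lowerOnes n) := by
  have hlower : (lowerOnes n).IsLowerTriangular := fun i j hij =>
    show (if j ≤ i then (1 : ℝ) else 0) = 0 from if_neg (not_le.mpr hij)
  rw [isUnit_iff_isUnit_det, det_of_isLowerTriangular _ hlower]
  simp [lowerOnes]

theorem lowerOnes_transpose_mul_diagonal_mul_apply {n : ℕ} (d : Fin n → ℝ) (i j : Fin n) :
    ((lowerOnes n)ᵀ * diagonal d * lowerOnes n) i j = ∑ k, if max i j ≤ k then d k else 0 := by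
  rw [mul_apply]
  simp only [mul_diagonal, transpose_apply, lowerOnes, of_apply, max_le_iff]
  refine sum_congr rfl fun k _ => ?_
  split_ifs <;> simp_all

theorem posDef_of_strictAnti_max {a : ℕ → ℝ} (ha : StrictAnti a) {n : ℕ} (h0 : 0 ≤ a n) :
    (of fun i j : Fin n => a (max (i : ℕ) j)).PosDef := by
  have hsplit : (of fun i j : Fin n => a (max (i : ℕ) j)) =
      (lowerOnes n)ᵀ * diagonal (fun k : Fin n => a k - a ((k : ℕ) + 1)) * lowerOnes n +
        a n • vecMulVec 1 (star 1) := by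
    ext i j
    have hmax : max (i : ℕ) j < n := max_lt i.isLt j.isLt
    rw [of_apply, add_apply, lowerOnes_transpose_mul_diagonal_mul_apply]
    simp only [Fin.le_def, Fin.coe_max, smul_apply, vecMulVec_apply, Pi.one_apply, star_one,
      mul_one, smul_eq_mul, Fin.sum_ite_le_sub_succ a hmax.le, sub_add_cancel]
  rw [hsplit]
  refine PosDef.add_posSemidef ?_ ((posSemidef_vecMulVec_self_star 1).smul h0)
  exact (PosDef.diagonal fun k => sub_pos.mpr (ha k.val.lt_succ_self)).conjTranspose_mul_mul_same
    (mulVec_injective_iff_isUnit.mpr (isUnit_lowerOnes n))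

end Matrix

theorem stable_spline_kernel_posDef_general
    (n : ℕ) (β : ℝ) (hβ0 : 0 < β) (hβ1 : β < 1)
    (K : Matrix (Fin n) (Fin n) ℝ)
    (hK : ∀ i j, K i j = β ^ (max (i : ℕ) (j : ℕ) + 1)) :
    K.PosDef := by
  have hpow : StrictAnti fun m : ℕ => β ^ (m + 1) :=
    (pow_right_strictAnti₀ hβ0 hβ1).comp_strictMono (strictMono_id.add_const 1)
  rw [show K = of fun i j : Fin n => β ^ (max (i : ℕ) j + 1) from ext hK]
  exact posDef_of_strictAnti_max hpow (pow_nonneg hβ0.le _)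

/-- The first-order stable spline kernel matrix
`[K_β]_{i,j} = β^{max(i,j)}` (1-based indices `1,…,n`) is positive definite
for every `β ∈ (0,1)` and every `n ≥ 1`. -/
theorem stable_spline_kernel_posDef
    (n : ℕ) (hn : 1 ≤ n) (β : ℝ) (hβ0 : 0 < β) (hβ1 : β < 1)
    (K : Matrix (Fin n) (Fin n) ℝ)
    (hK : ∀ i j, K i j = β ^ (max (i : ℕ) (j : ℕ) + 1)) :
    K.PosDef :=
  stable_spline_kernel_posDef_general n β hβ0 hβ1 K hK
end

section
/- The determinant of the n × n stable spline kernel matrix K_β, with [K_β]_{i,j} = β^{max(i,j)} and β ∈ (0,1), equals β^{n(n+1)/2} (1-β)^{n-1}. -/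
open Finset Matrix

lemma telescope_Ico (f : ℕ → ℝ) {m n : ℕ} (h : m ≤ n) :
    ∑ k ∈ Finset.Ico m n, (f k - f (k + 1)) = f m - f n := by
  rw [Finset.sum_Ico_eq_sub _ h, Finset.sum_range_sub' f, Finset.sum_range_sub' f]
  ring

/-- The determinant of the `n × n` stable spline kernel matrix
`[K_β]_{i,j} = β^{max(i,j)}` (1-based indices) equals
`β^{n(n+1)/2} (1-β)^{n-1}`. -/
theorem stable_spline_kernel_det
    (n : ℕ) (hn : 1 ≤ n) (β : ℝ) (hβ0 : 0 < β) (hβ1 : β < 1)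
    (K : Matrix (Fin n) (Fin n) ℝ)
    (hK : ∀ i j, K i j = β ^ (max (i : ℕ) (j : ℕ) + 1)) :
    K.det = β ^ (n * (n + 1) / 2) * (1 - β) ^ (n - 1) := by
  set d0 : ℕ → ℝ := fun k => β ^ (k + 1) - β ^ (k + 2) +
    (if k = n - 1 then β ^ (n + 1) else 0) with hd0
  set M : Matrix (Fin n) (Fin n) ℝ := fun i k => if i ≤ k then 1 else 0 with hM
  set d : Fin n → ℝ := fun k => d0 (k : ℕ) with hd
  have hfact : K = M * Matrix.diagonal d * Mᵀ := by
    ext i j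
    rw [hK, Matrix.mul_assoc, Matrix.mul_apply]
    have : ∀ k : Fin n, M i k * (Matrix.diagonal d * Mᵀ) k j
        = if max (i : ℕ) (j : ℕ) ≤ (k : ℕ) then d0 (k : ℕ) else 0 := by
      intro k
      rw [Matrix.diagonal_mul, Matrix.transpose_apply]
      simp only [hM]
      rcases le_or_gt i k with hik | hik <;> rcases le_or_gt j k with hjk | hjk
      · simp [hik, hjk, Fin.le_def.mp hik, Fin.le_def.mp hjk, max_le_iff, hd]
      · simp [hik, not_le.mpr hjk, max_le_iff, Nat.not_le.mpr (Fin.lt_def.mp hjk)]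
      · simp [not_le.mpr hik, max_le_iff, Nat.not_le.mpr (Fin.lt_def.mp hik)]
      · simp [not_le.mpr hik, max_le_iff, Nat.not_le.mpr (Fin.lt_def.mp hik)]
    rw [Finset.sum_congr rfl (fun k _ => this k)]
    set m := max (i : ℕ) (j : ℕ) with hm
    have hmn : m < n := lt_of_le_of_lt (le_refl m) (by
      rcases max_cases (i : ℕ) (j : ℕ) with ⟨h1, _⟩ | ⟨h1, _⟩ <;> rw [hm, h1]
      · exact i.isLt
      · exact j.isLt)
    rw [Fin.sum_univ_eq_sum_range (fun k => if m ≤ k then d0 k else 0) n]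
    rw [← Finset.sum_filter]
    have hfil : Finset.filter (fun k => m ≤ k) (Finset.range n) = Finset.Ico m n := by
      ext k; simp [Finset.mem_filter, Finset.mem_Ico, and_comm]
    rw [hfil]
    have hsplit : ∑ k ∈ Finset.Ico m n, d0 k
        = (∑ k ∈ Finset.Ico m n, (β ^ (k + 1) - β ^ (k + 2)))
          + ∑ k ∈ Finset.Ico m n, (if k = n - 1 then β ^ (n + 1) else 0) := by
      rw [← Finset.sum_add_distrib]
    rw [hsplit, telescope_Ico (fun k => β ^ (k + 1)) hmn.le]
    rw [Finset.sum_ite_eq' (Finset.Ico m n) (n - 1) (fun _ => β ^ (n + 1))]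
    have : n - 1 ∈ Finset.Ico m n := by
      simp [Finset.mem_Ico]
      constructor
      · omega
      · omega
    rw [if_pos this]
    ring
  have hMtri : M.BlockTriangular id := by
    intro i j hij
    simp only [hM]
    exact if_neg (not_le.mpr hij)
  have hdet : K.det = ∏ k ∈ Finset.range n, d0 k := by
    rw [hfact, Matrix.det_mul, Matrix.det_mul, Matrix.det_transpose,
      Matrix.det_of_upperTriangular hMtri, Matrix.det_diagonal]
    have h1 : ∏ i : Fin n, M i i = 1 := by
      simp [hM]
    rw [h1, one_mul, mul_one, hd]
    exact Fin.prod_univ_eq_prod_range (fun k => d0 k) n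
  obtain ⟨p, rfl⟩ : ∃ p, n = p + 1 := ⟨n - 1, by omega⟩
  rw [hdet, Finset.prod_range_succ]
  have hlast : d0 p = β ^ (p + 1) := by
    simp only [hd0]
    rw [if_pos (by omega : p = p + 1 - 1)]
    ring_nf
  have hrest : ∀ k ∈ Finset.range p, d0 k = (1 - β) * β ^ (k + 1) := by
    intro k hk
    simp only [hd0]
    rw [if_neg (by simp at hk; omega)]
    ring
  rw [hlast, Finset.prod_congr rfl hrest, Finset.prod_mul_distrib,
    Finset.prod_const, Finset.prod_pow_eq_pow_sum]
  have hsum : (∑ k ∈ Finset.range p, (k + 1)) + (p + 1) = (p + 1) * (p + 1 + 1) / 2 := by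
    rw [← Finset.sum_range_succ (fun k => k + 1) p]
    have h := Finset.sum_range_succ' (fun k => k) (p + 1)
    rw [Finset.sum_range_id] at h
    simp only [add_zero] at h
    rw [← h]
    congr 1
    simp [Nat.add_sub_cancel, Nat.mul_comm]
  rw [← hsum, pow_add]
  simp
  ring
end

section
/- Identifiability condition (Proposition 1): the matrix (1/σ_y²) G^T P_y^T P_y G + (1/σ_u²) P_u^T P_u is invertible if and only if for every missing input time τ ∉ {t^u_i}, the vectors {P_y S^{τ-1} g' : τ missing} are such that no nontrivial linear combination Σ_{τ missing} α_τ P_y S^{τ-1} g' vanishes, where S is the upward shift and g' the zero-extension of g. In particular, invertibility holds whenever for every missing input time τ there exist k ∈ {0,...,n} and an observed output time τ_y ∈ {t^y_i} with g_k ≠ 0 and k + τ = τ_y and the columns {P_y G e_τ} over missing τ are linearly independent. -/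
open Matrix

/-! With `A = Py * G`, the matrix is `a • (Aᵀ * A) + b • (Puᵀ * Pu)` with `a, b > 0`. Its quadratic
form is `a ‖A x‖² + b ‖Pu x‖²`, so its kernel is `ker A ∩ ker Pu`. As `Pu` selects the observed
input times, `ker Pu` consists of the vectors supported on the missing input times; and as the
shift `(Sᵀ)^τ g'` is the `τ`-th column of the Toeplitz matrix `G`, the combination
`∑ α τ • Py (Sᵀ)^τ g'` is `A α`. -/

theorem dotProduct_transpose_mul_self_mulVec {m n R : Type*} [Fintype m] [Fintype n]
    [CommSemiring R] (A : Matrix m n R) (x : n → R) :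
    x ⬝ᵥ (Aᵀ * A) *ᵥ x = (A *ᵥ x) ⬝ᵥ (A *ᵥ x) := by
  rw [← mulVec_mulVec, dotProduct_mulVec, vecMul_transpose]

section Gram

variable {m n k R : Type*} [Fintype m] [Fintype n] [Fintype k]
  [Field R] [LinearOrder R] [IsStrictOrderedRing R]

theorem smul_gram_add_smul_gram_mulVec_eq_zero_iff {a b : R} (ha : 0 < a) (hb : 0 < b)
    (A : Matrix m n R) (B : Matrix k n R) (x : n → R) :
    (a • (Aᵀ * A) + b • (Bᵀ * B)) *ᵥ x = 0 ↔ A *ᵥ x = 0 ∧ B *ᵥ x = 0 := by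
  refine ⟨fun h => ?_, fun ⟨hA, hB⟩ => by
    simp [add_mulVec, smul_mulVec, ← mulVec_mulVec, hA, hB]⟩
  have hquad : a * ((A *ᵥ x) ⬝ᵥ (A *ᵥ x)) + b * ((B *ᵥ x) ⬝ᵥ (B *ᵥ x)) = 0 := by
    rw [← dotProduct_transpose_mul_self_mulVec, ← dotProduct_transpose_mul_self_mulVec,
      ← smul_eq_mul, ← smul_eq_mul, ← dotProduct_smul, ← dotProduct_smul, ← dotProduct_add,
      ← smul_mulVec, ← smul_mulVec, ← add_mulVec, h, dotProduct_zero]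
  have hA : 0 ≤ (A *ᵥ x) ⬝ᵥ (A *ᵥ x) := Fintype.sum_nonneg fun _ => mul_self_nonneg _
  have hB : 0 ≤ (B *ᵥ x) ⬝ᵥ (B *ᵥ x) := Fintype.sum_nonneg fun _ => mul_self_nonneg _
  simpa [ha.ne', hb.ne'] using
    (add_eq_zero_iff_of_nonneg (mul_nonneg ha.le hA) (mul_nonneg hb.le hB)).1 hquad

theorem isUnit_smul_gram_add_smul_gram_iff [DecidableEq n] {a b : R} (ha : 0 < a) (hb : 0 < b)
    (A : Matrix m n R) (B : Matrix k n R) :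
    IsUnit (a • (Aᵀ * A) + b • (Bᵀ * B)) ↔ ∀ x, A *ᵥ x = 0 → B *ᵥ x = 0 → x = 0 := by
  rw [← mulVec_injective_iff_isUnit, ← coe_mulVecLin, injective_iff_map_eq_zero]
  simp only [coe_mulVecLin, smul_gram_add_smul_gram_mulVec_eq_zero_iff ha hb, and_imp]

end Gram

theorem mulVec_eq_comp_of_selection {m n R : Type*} [Fintype n] [DecidableEq n] [NonAssocSemiring R]
    {P : Matrix m n R} {t : m → n} (hP : ∀ i j, P i j = if j = t i then 1 else 0) (x : n → R) :
    P *ᵥ x = x ∘ t := by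
  ext i
  simp [mulVec, dotProduct, hP]

section Shift

variable {N : ℕ} {R : Type*} [Semiring R] {S : Matrix (Fin N) (Fin N) R}

theorem transpose_shift_mulVec_apply (hS : ∀ i j, S i j = if (j : ℕ) = (i : ℕ) + 1 then 1 else 0)
    (v : Fin N → R) (i : Fin N) :
    (Sᵀ *ᵥ v) i = if h : 1 ≤ (i : ℕ) then v ⟨i - 1, by omega⟩ else 0 := by
  simp only [mulVec, dotProduct, transpose_apply, hS, ite_mul, one_mul, zero_mul]
  split_ifs with h
  · have hpred : ∀ j : Fin N, (i : ℕ) = j + 1 ↔ j = ⟨i - 1, by omega⟩ := fun j => by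
      simp only [Fin.ext_iff]; omega
    simp_rw [hpred, Finset.sum_ite_eq', Finset.mem_univ, if_true]
  · exact Finset.sum_eq_zero fun j _ => if_neg (by omega)

theorem transpose_shift_pow_mulVec_apply
    (hS : ∀ i j, S i j = if (j : ℕ) = (i : ℕ) + 1 then 1 else 0) (m : ℕ)
    (v : Fin N → R) (i : Fin N) :
    ((Sᵀ) ^ m *ᵥ v) i = if h : m ≤ (i : ℕ) then v ⟨i - m, by omega⟩ else 0 := by
  induction m generalizing v with
  | zero => simp
  | succ m ih =>
    rw [pow_succ, ← mulVec_mulVec, ih]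
    split_ifs with h1 h2 h2
    · rw [transpose_shift_mulVec_apply hS, dif_pos (by simp; omega)]
      congr 1
    · rw [transpose_shift_mulVec_apply hS, dif_neg (by simp; omega)]
    · omega
    · rfl

theorem transpose_shift_pow_mulVec_eq_col
    (hS : ∀ i j, S i j = if (j : ℕ) = (i : ℕ) + 1 then 1 else 0) {g' : Fin N → R}
    {G : Matrix (Fin N) (Fin N) R}
    (hG : ∀ i j, G i j =
      if _h : (j : ℕ) ≤ (i : ℕ) then g' ⟨(i : ℕ) - (j : ℕ), (Nat.sub_le _ _).trans_lt i.isLt⟩ else 0)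
    (τ : Fin N) : (Sᵀ) ^ (τ : ℕ) *ᵥ g' = G.col τ := by
  ext i
  rw [transpose_shift_pow_mulVec_apply hS, col_apply, hG]

end Shift

theorem sum_smul_mulVec_transpose_shift_pow {N : ℕ} {m R : Type*} [CommSemiring R]
    {S G : Matrix (Fin N) (Fin N) R}
    (hS : ∀ i j, S i j = if (j : ℕ) = (i : ℕ) + 1 then 1 else 0) {g' : Fin N → R}
    (hG : ∀ i j, G i j =
      if _h : (j : ℕ) ≤ (i : ℕ) then g' ⟨(i : ℕ) - (j : ℕ), (Nat.sub_le _ _).trans_lt i.isLt⟩ else 0)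
    (P : Matrix m (Fin N) R) (α : Fin N → R) :
    ∑ τ : Fin N, α τ • P *ᵥ ((Sᵀ) ^ (τ : ℕ) *ᵥ g') = (P * G) *ᵥ α := by
  simp_rw [transpose_shift_pow_mulVec_eq_col hS hG, ← mulVec_single_one, ← mulVec_mulVec,
    ← mulVec_smul, ← mulVec_sum, ← pi_eq_sum_univ' α]

theorem eq_zero_of_mulVec_eq_zero_of_linearIndependent {m n R : Type*} [Fintype n] [DecidableEq n]
    [CommRing R] {A : Matrix m n R} {p : n → Prop}
    (hli : LinearIndependent R (fun j : {j // p j} => A *ᵥ Pi.single j.1 1))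
    {x : n → R} (hx : ∀ j, ¬ p j → x j = 0) (hAx : A *ᵥ x = 0) : x = 0 := by
  classical
  have hcomb : ∑ j : {j // p j}, x j • A *ᵥ Pi.single j.1 1 = 0 :=
    calc ∑ j : {j // p j}, x j • A *ᵥ Pi.single j.1 1
        = ∑ j, x j • A *ᵥ Pi.single j 1 := by
          rw [← Fintype.sum_subtype_add_sum_subtype p (fun j => x j • A *ᵥ Pi.single j 1),
            Fintype.sum_eq_zero (fun j : {j // ¬ p j} => _) (fun j => by rw [hx j j.2, zero_smul]),
            add_zero]
      _ = A *ᵥ x := by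
          conv_rhs => rw [pi_eq_sum_univ' x]
          simp only [mulVec_sum, mulVec_smul]
      _ = 0 := hAx
  have hc := Fintype.linearIndependent_iff.1 hli (fun j => x j) hcomb
  ext j
  by_cases hj : p j
  · exact hc ⟨j, hj⟩
  · exact hx j hj

theorem identifiability_proposition
    (N Nu Ny : ℕ) (σy2 σu2 : ℝ) (hσy : 0 < σy2) (hσu : 0 < σu2)
    (g' : Fin N → ℝ)
    (G : Matrix (Fin N) (Fin N) ℝ)
    (hG : ∀ i j, G i j = if h : (j : ℕ) ≤ (i : ℕ) then g' ⟨(i : ℕ) - (j : ℕ), by omega⟩ else 0)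
    (tu : Fin Nu → Fin N)
    (Pu : Matrix (Fin Nu) (Fin N) ℝ)
    (hPu : ∀ i j, Pu i j = if j = tu i then 1 else 0)
    (Py : Matrix (Fin Ny) (Fin N) ℝ)
    (S : Matrix (Fin N) (Fin N) ℝ)
    (hS : ∀ i j, S i j = if (j : ℕ) = (i : ℕ) + 1 then 1 else 0) :
    (IsUnit (σy2⁻¹ • (Gᵀ * Pyᵀ * Py * G) + σu2⁻¹ • (Puᵀ * Pu)) ↔
      ∀ α : Fin N → ℝ, (∀ i : Fin N, (∃ k, tu k = i) → α i = 0) →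
        (∑ τ : Fin N, α τ • Py.mulVec (((Sᵀ) ^ (τ : ℕ)).mulVec g')) = 0 → α = 0) ∧
    (LinearIndependent ℝ
        (fun τ : {τ : Fin N // ¬ ∃ k, tu k = τ} =>
          (Py * G).mulVec (Pi.single τ.1 1)) →
      IsUnit (σy2⁻¹ • (Gᵀ * Pyᵀ * Py * G) + σu2⁻¹ • (Puᵀ * Pu))) := by
  have hgram : Gᵀ * Pyᵀ * Py * G = (Py * G)ᵀ * (Py * G) := by
    rw [transpose_mul, Matrix.mul_assoc, Matrix.mul_assoc]
  have hker_Pu (x : Fin N → ℝ) : Pu *ᵥ x = 0 ↔ ∀ i, (∃ k, tu k = i) → x i = 0 := by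
    simp [mulVec_eq_comp_of_selection hPu, funext_iff]
  rw [hgram, isUnit_smul_gram_add_smul_gram_iff (inv_pos.2 hσy) (inv_pos.2 hσu)]
  simp only [sum_smul_mulVec_transpose_shift_pow hS hG, hker_Pu]
  exact ⟨⟨fun h α hα hA => h α hA hα, fun h x hA hPx => h x hPx hA⟩, fun hli x hA hPx =>
    eq_zero_of_mulVec_eq_zero_of_linearIndependent hli (fun i hi => hPx i (not_not.1 hi)) hA⟩
end
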